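/- For every fixed M ∈ ℕ, the node entailment relation ⊨_M is a well-quasi-order on nodes: every infinite sequence (Z₁,IA₁), (Z₂,IA₂), … of nodes contains indices i < j such that (Zᵢ,IAᵢ) ⊨_M (Zⱼ,IAⱼ). -/

import Mathlib

open scoped Classical NNReal

namespace ATAPaper

/-! ## Intervals with natural endpoints (possibly unbounded) -/

inductive NInterval where
  | cc (a b : ℕ)
  | co (a b : ℕ)
  | oc (a b : ℕ)
  | oo (a b : ℕ)
  | ci (a : ℕ)
  | oi (a : ℕ)
deriving DecidableEq

/-- Membership of a nonnegative real in an interval. -/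
def NInterval.mem (v : ℝ≥0) : NInterval → Prop
  | .cc a b => (a : ℝ≥0) ≤ v ∧ v ≤ (b : ℝ≥0)
  | .co a b => (a : ℝ≥0) ≤ v ∧ v < (b : ℝ≥0)
  | .oc a b => (a : ℝ≥0) < v ∧ v ≤ (b : ℝ≥0)
  | .oo a b => (a : ℝ≥0) < v ∧ v < (b : ℝ≥0)
  | .ci a => (a : ℝ≥0) ≤ v
  | .oi a => (a : ℝ≥0) < v

/-- The largest constant appearing in an interval. -/
def NInterval.bound : NInterval → ℕ
  | .cc a b | .co a b | .oc a b | .oo a b => max a b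
  | .ci a | .oi a => a

/-! ## Transition formulas `Φ(Q)` with reset `x.φ` and deactivation `x̄.φ` -/

inductive TF (Q : Type*) where
  | tt
  | ff
  | loc (q : Q)
  | guard (I : NInterval)
  | and (φ ψ : TF Q)
  | or (φ ψ : TF Q)
  | reset (φ : TF Q)
  | deact (φ : TF Q)

/-- A state of a 1-ATA is a location together with a clock value which is
either inactive (`none` = ⊥) or a nonnegative real.  A configuration is a
finite set of states. -/
abbrev Config (Q : Type*) := Finset (Q × Option ℝ≥0)

section BasicDefs

variable {Q A : Type*}

/-- `M ⊨_v φ`. -/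
def TF.sat (M : Config Q) : TF Q → Option ℝ≥0 → Prop
  | .tt, _ => True
  | .ff, _ => False
  | .loc q, v => (q, v) ∈ M
  | .guard I, v => v = none ∨ ∃ r, v = some r ∧ I.mem r
  | .and φ ψ, v => φ.sat M v ∧ ψ.sat M v
  | .or φ ψ, v => φ.sat M v ∨ ψ.sat M v
  | .reset φ, _ => φ.sat M (some 0)
  | .deact φ, _ => φ.sat M none

/-- `M` is a minimal model of `φ` on `v`. -/
def MinModel (M : Config Q) (v : Option ℝ≥0) (φ : TF Q) : Prop :=
  φ.sat M v ∧ ∀ M' ⊂ M, ¬ φ.sat M' v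

/-- The disjuncts of a formula (assumed to be in disjunctive normal form). -/
def TF.disjuncts : TF Q → List (TF Q)
  | .or φ ψ => φ.disjuncts ++ ψ.disjuncts
  | φ => [φ]

/-- The intervals occurring (anywhere) in a transition formula. -/
def TF.guards : TF Q → List NInterval
  | .guard I => [I]
  | .and φ ψ | .or φ ψ => φ.guards ++ ψ.guards
  | .reset φ | .deact φ => φ.guards
  | _ => []

/-! ## One-clock alternating timed automata with deactivation -/

structure OneATA (Q A : Type*) where
  init : Q
  final : Set Q
  delta : Q → A → Option (TF Q)

/-- `C` is one of the disjuncts of `δ(q,a)`. -/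
def OneATA.isTarget (𝒜 : OneATA Q A) (q : Q) (a : A) (C : TF Q) : Prop :=
  ∃ φ, 𝒜.delta q a = some φ ∧ C ∈ φ.disjuncts

/-- Time elapse on a configuration: add `d` to every active value, keep `⊥`. -/
noncomputable def Config.delay (γ : Config Q) (d : ℝ≥0) : Config Q :=
  γ.image (fun s => (s.1, s.2.map (· + d)))

/-- Discrete transition `γ →^{a,C} γ'` where the target `χ` assigns to each
state of `γ` a disjunct of the corresponding transition formula. -/
def OneATA.DStep (𝒜 : OneATA Q A) (γ : Config Q) (a : A)
    (χ : Q × Option ℝ≥0 → TF Q) (γ' : Config Q) : Prop :=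
  (∀ s ∈ γ, 𝒜.isTarget s.1 a (χ s)) ∧
  ∃ Mo : Q × Option ℝ≥0 → Config Q,
    (∀ s ∈ γ, MinModel (Mo s) s.2 (χ s)) ∧ γ' = γ.biUnion Mo

/-- Combined transition `γ →^{d,a,C} γ'`. -/
def OneATA.Step (𝒜 : OneATA Q A) (γ : Config Q) (d : ℝ≥0) (a : A)
    (χ : Q × Option ℝ≥0 → TF Q) (γ' : Config Q) : Prop :=
  𝒜.DStep (γ.delay d) a χ γ'

/-- A configuration is accepting if all its locations are accepting. -/
def OneATA.AcceptingCfg (𝒜 : OneATA Q A) (γ : Config Q) : Prop :=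
  ∀ s ∈ γ, s.1 ∈ 𝒜.final

/-- Accepting runs on (finite) timed words. -/
inductive OneATA.AccRun (𝒜 : OneATA Q A) : Config Q → List (ℝ≥0 × A) → Prop
  | nil {γ} : 𝒜.AcceptingCfg γ → 𝒜.AccRun γ []
  | cons {γ γ' : Config Q} {d : ℝ≥0} {a : A} {w : List (ℝ≥0 × A)}
      (χ : Q × Option ℝ≥0 → TF Q) :
      𝒜.Step γ d a χ γ' → 𝒜.AccRun γ' w → 𝒜.AccRun γ ((d, a) :: w)

/-- The language of a 1-ATA. -/
def OneATA.Lang (𝒜 : OneATA Q A) : Set (List (ℝ≥0 × A)) :=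
  {w | 𝒜.AccRun {(𝒜.init, some 0)} w}

/-- Reachability between configurations by timed and discrete transitions. -/
inductive OneATA.Reach (𝒜 : OneATA Q A) : Config Q → Config Q → Prop
  | refl (γ) : 𝒜.Reach γ γ
  | delay {γ γ'} (d : ℝ≥0) : 𝒜.Reach γ γ' → 𝒜.Reach γ (γ'.delay d)
  | step {γ γ' γ''} (a : A) (χ) : 𝒜.Reach γ γ' → 𝒜.DStep γ' a χ γ'' → 𝒜.Reach γ γ''

/-- The width of a configuration: the number of active states. -/
noncomputable def Config.width (γ : Config Q) : ℕ :=
  (γ.filter (fun s => s.2 ≠ none)).card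

/-- The 1-ATA has width at most `k`. -/
def OneATA.WidthBounded (𝒜 : OneATA Q A) (k : ℕ) : Prop :=
  ∀ γ, 𝒜.Reach {(𝒜.init, some 0)} γ → γ.width ≤ k

/-- All constants appearing in the automaton are at most `M`. -/
def OneATA.BoundedBy (𝒜 : OneATA Q A) (M : ℕ) : Prop :=
  ∀ q a φ, 𝒜.delta q a = some φ → ∀ I ∈ φ.guards, I.bound ≤ M

/-! ## Region equivalence and entailment on configurations -/

/-- `γ ≃_M γ'` via the bijection `h`. -/
def RegionEquivWith (M : ℕ) (γ γ' : Config Q)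
    (h : Q × Option ℝ≥0 → Q × Option ℝ≥0) : Prop :=
  Set.BijOn h ↑γ ↑γ' ∧
  (∀ s ∈ γ, (h s).1 = s.1) ∧
  (∀ s ∈ γ, ((h s).2 = none ↔ s.2 = none)) ∧
  (∀ s ∈ γ, ∀ r r', s.2 = some r → (h s).2 = some r' →
    ((r ≤ (M : ℝ≥0)) ↔ (r' ≤ (M : ℝ≥0))) ∧
    (r ≤ (M : ℝ≥0) →
      (⌊(r : ℝ)⌋ = ⌊(r' : ℝ)⌋ ∧ (Int.fract (r : ℝ) = 0 ↔ Int.fract (r' : ℝ) = 0)))) ∧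
  (∀ s₁ ∈ γ, ∀ s₂ ∈ γ, ∀ r₁ r₂ r₁' r₂',
    s₁.2 = some r₁ → s₂.2 = some r₂ → (h s₁).2 = some r₁' → (h s₂).2 = some r₂' →
    r₁ ≤ (M : ℝ≥0) → r₂ ≤ (M : ℝ≥0) →
    (Int.fract (r₁ : ℝ) ≤ Int.fract (r₂ : ℝ) ↔ Int.fract (r₁' : ℝ) ≤ Int.fract (r₂' : ℝ)))

/-- Region equivalence `γ ≃_M γ'`. -/
def RegionEquiv (M : ℕ) (γ γ' : Config Q) : Prop := ∃ h, RegionEquivWith M γ γ' h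

/-- Configuration entailment `γ ⊨_M γ'` : some subset of `γ'` is region equivalent
to `γ`. -/
def CfgEntails (M : ℕ) (γ γ' : Config Q) : Prop :=
  ∃ γ'' ⊆ γ', RegionEquiv M γ γ''

end BasicDefs


/-! ## MTL (negation normal form) -/

inductive MTL (A : Type*) where
  | atom (a : A)
  | natom (a : A)
  | conj (φ ψ : MTL A)
  | disj (φ ψ : MTL A)
  | next (I : NInterval) (φ : MTL A)
  | untl (I : NInterval) (φ ψ : MTL A)

section MTLDefs

variable {A : Type*}

/-- Accumulated time `Σ_{c=1}^{p} d_c` of the first `p` letters of a timed word. -/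
def twtime (w : List (ℝ≥0 × A)) (p : ℕ) : ℝ≥0 := ((w.take p).map Prod.fst).sum

/-- `(w, i) ⊨ φ` (positions are 0-based). -/
def MTL.holdsAt (w : List (ℝ≥0 × A)) : MTL A → ℕ → Prop
  | .atom a, i => ∃ h : i < w.length, (w.get ⟨i, h⟩).2 = a
  | .natom a, i => ∃ h : i < w.length, (w.get ⟨i, h⟩).2 ≠ a
  | .conj φ ψ, i => φ.holdsAt w i ∧ ψ.holdsAt w i
  | .disj φ ψ, i => φ.holdsAt w i ∨ ψ.holdsAt w i
  | .next I φ, i => ∃ h : i + 1 < w.length, φ.holdsAt w (i + 1) ∧ I.mem (w.get ⟨i + 1, h⟩).1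
  | .untl I φ ψ, i => ∃ k, i ≤ k ∧ k < w.length ∧ ψ.holdsAt w k ∧
      I.mem (twtime w (k + 1) - twtime w (i + 1)) ∧
      ∀ j, i ≤ j → j < k → φ.holdsAt w j

/-- The language of an MTL formula (`w ⊨ φ` iff `φ` holds at the first position). -/
def MTL.Lang (φ : MTL A) : Set (List (ℝ≥0 × A)) := {w | φ.holdsAt w 0}

/-- Pure LTL formulas: every interval is `[0, ∞)`. -/
def MTL.isPure : MTL A → Bool
  | .atom _ | .natom _ => true
  | .conj φ ψ | .disj φ ψ => φ.isPure && ψ.isPure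
  | .next I φ => decide (I = NInterval.ci 0) && φ.isPure
  | .untl I φ ψ => decide (I = NInterval.ci 0) && φ.isPure && ψ.isPure

/-- The subformulas of an MTL formula. -/
def MTL.subfs : MTL A → List (MTL A)
  | .atom a => [.atom a]
  | .natom a => [.natom a]
  | .conj φ ψ => .conj φ ψ :: (φ.subfs ++ ψ.subfs)
  | .disj φ ψ => .disj φ ψ :: (φ.subfs ++ ψ.subfs)
  | .next I φ => .next I φ :: φ.subfs
  | .untl I φ ψ => .untl I φ ψ :: (φ.subfs ++ ψ.subfs)

/-- One-sided MTL: in every Until, the left argument is a pure LTL formula. -/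
def MTL.oneSided : MTL A → Prop
  | .atom _ | .natom _ => True
  | .conj φ ψ | .disj φ ψ => φ.oneSided ∧ ψ.oneSided
  | .next _ φ => φ.oneSided
  | .untl _ φ ψ => φ.isPure = true ∧ ψ.oneSided

/-! ## The MTL-to-1-ATA construction with deactivation -/

/-- Locations of the constructed automaton: the initial location `φ_init`,
locations for formulas (in particular Until subformulas and `φ` itself), and
locations `(X_I ψ)ʳ`. -/
inductive MLoc (A : Type*) where
  | start
  | form (ψ : MTL A)
  | nextr (I : NInterval) (ψ : MTL A)

/-- Prefix `x̄.` if `ψ` is pure LTL, and nothing otherwise. -/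
def barP (ψ : MTL A) (φ : TF (MLoc A)) : TF (MLoc A) :=
  if ψ.isPure then .deact φ else φ

/-- Prefix `x̄.` if `ψ` is pure LTL, and `x.` otherwise. -/
def rhoP (ψ : MTL A) (φ : TF (MLoc A)) : TF (MLoc A) :=
  if ψ.isPure then .deact φ else .reset φ

variable [DecidableEq A]

/-- The transition formula `δ(ψ, a)` for subformulas `ψ`. -/
def dform : MTL A → A → TF (MLoc A)
  | .atom b, a => if b = a then .tt else .ff
  | .natom b, a => if b = a then .ff else .tt
  | .conj φ ψ, a => .and (barP φ (dform φ a)) (barP ψ (dform ψ a))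
  | .disj φ ψ, a => .or (barP φ (dform φ a)) (barP ψ (dform ψ a))
  | .next I ψ, _ => .reset (.loc (.nextr I ψ))
  | .untl I φ ψ, a =>
      .or (.and (rhoP ψ (dform ψ a)) (.guard I))
          (.and (rhoP φ (dform φ a)) (.loc (.form (.untl I φ ψ))))

/-- The transition function of the constructed automaton `A'_φ`. -/
def mlocDelta (φ₀ : MTL A) : MLoc A → A → Option (TF (MLoc A))
  | .start, a => some (rhoP φ₀ (dform φ₀ a))
  | .form ψ, a => some (dform ψ a)
  | .nextr I ψ, a => some (.and (.guard I) (rhoP ψ (dform ψ a)))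

/-- The 1-ATA `A'_φ` constructed from an MTL formula `φ`:
initial location `φ_init`, no accepting locations. -/
def ataOf (φ : MTL A) : OneATA (MLoc A) A :=
  { init := .start, final := ∅, delta := mlocDelta φ }

end MTLDefs

section KB
variable {A : Type*}
/-- The recursive width bound `k_ψ`. -/
def kBound : MTL A → ℕ
  | .atom _ | .natom _ => 1
  | .conj φ ψ => if (MTL.conj φ ψ).isPure then 1 else kBound φ + kBound ψ
  | .disj φ ψ => if (MTL.disj φ ψ).isPure then 1 else max (kBound φ) (kBound ψ)
  | .next I φ => if (MTL.next I φ).isPure then 1 else kBound φ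
  | .untl I φ ψ => if (MTL.untl I φ ψ).isPure then 1 else kBound ψ
end KB


/-! ## Zones (variables `x_{q,i}`), nodes and their configuration semantics -/

section ZoneDefs

variable {Q A : Type*}

/-- A (semantic) zone: a finite set of variables `x_{q,i}` together with the
set of valuations satisfying its constraints. -/
structure SemZone (Q : Type*) where
  vars : Finset (Q × ℕ)
  val : ((Q × ℕ) → ℝ≥0) → Prop

/-- `γ` satisfies the node `(Z, IA)` via the surjection `h`. -/
def NodeSatVia (Z : SemZone Q) (IA : Finset (Q × ℕ)) (γ : Config Q)
    (h : Q × ℕ → Q × Option ℝ≥0) : Prop :=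
  (∀ y ∈ Z.vars ∪ IA, (h y).1 = y.1) ∧
  (∀ y ∈ Z.vars ∪ IA, h y ∈ γ) ∧
  (∀ s ∈ γ, ∃ y ∈ Z.vars ∪ IA, h y = s) ∧
  (∀ y ∈ IA, (h y).2 = none) ∧
  ∃ ν : (Q × ℕ) → ℝ≥0, (∀ y ∈ Z.vars, (h y).2 = some (ν y)) ∧ Z.val ν

/-- `γ ∈ ⟦(Z, IA)⟧`. -/
def NodeSat (Z : SemZone Q) (IA : Finset (Q × ℕ)) (γ : Config Q) : Prop :=
  ∃ h, NodeSatVia Z IA γ h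

/-- The special empty node `(Z_∅, {})`, satisfied exactly by the empty
configuration. -/
def emptySemZone {Q : Type*} : SemZone Q := ⟨∅, fun _ => True⟩

/-- The initial node `((x_{q₀,1} = 0), ∅)`. -/
def initSemZone (𝒜 : OneATA Q A) : SemZone Q :=
  ⟨{(𝒜.init, 1)}, fun ν => ν (𝒜.init, 1) = 0⟩

/-! ### Simple clauses and the successor computation -/

/-- A clause is a conjunction of atoms of the form `true`, `false`, `q`, `I`,
`x.q`, `x̄.q`. -/
def TF.isSimpleConj : TF Q → Bool
  | .tt => true
  | .ff => true
  | .loc _ => true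
  | .guard _ => true
  | .reset (.loc _) => true
  | .deact (.loc _) => true
  | .and φ ψ => φ.isSimpleConj && ψ.isSimpleConj
  | _ => false

/-- Every transition formula of the automaton is in disjunctive normal form. -/
def OneATA.normalized (𝒜 : OneATA Q A) : Prop :=
  ∀ q a φ, 𝒜.delta q a = some φ → ∀ C ∈ φ.disjuncts, C.isSimpleConj = true

/-- The interval atoms of a clause. -/
def TF.topGuards : TF Q → List NInterval
  | .guard I => [I]
  | .and φ ψ => φ.topGuards ++ ψ.topGuards
  | _ => []

/-- The location atoms `q` of a clause. -/
def TF.atomLocs : TF Q → List Q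
  | .loc q => [q]
  | .and φ ψ => φ.atomLocs ++ ψ.atomLocs
  | _ => []

/-- The reset atoms `x.q` of a clause. -/
def TF.resetLocs : TF Q → List Q
  | .reset (.loc q) => [q]
  | .and φ ψ => φ.resetLocs ++ ψ.resetLocs
  | _ => []

/-- The deactivation atoms `x̄.q` of a clause. -/
def TF.deactLocs : TF Q → List Q
  | .deact (.loc q) => [q]
  | .and φ ψ => φ.deactLocs ++ ψ.deactLocs
  | _ => []

/-- The inactive variable set of the successor node: `x'_{q,0}` for every atom
`x̄.q`, and for every atom `q` of a clause of an inactive variable. -/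
noncomputable def succIA (Z : SemZone Q) (IA : Finset (Q × ℕ))
    (T : Q × ℕ → TF Q) : Finset (Q × ℕ) :=
  ((Z.vars ∪ IA).biUnion fun y => ((T y).deactLocs.toFinset).image fun q => (q, 0)) ∪
  (IA.biUnion fun y => ((T y).atomLocs.toFinset).image fun q => (q, 0))

/-- Number of active variables whose clause contains the atom `q`. -/
noncomputable def copyCount (Z : SemZone Q) (T : Q × ℕ → TF Q) (q : Q) : ℕ :=
  (Z.vars.filter fun y => q ∈ (T y).atomLocs).card

/-- The active variable set of the successor node: `x'_{q,1}` for resets, and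
fresh variables `x'_{q,ℓ}` with `2 ≤ ℓ` (smallest free indices) for atoms `q`
of clauses of active variables. -/
noncomputable def succVars (Z : SemZone Q) (IA : Finset (Q × ℕ))
    (T : Q × ℕ → TF Q) : Finset (Q × ℕ) :=
  (((Z.vars ∪ IA).biUnion fun y => (T y).resetLocs.toFinset).image fun q => (q, 1)) ∪
  ((Z.vars.biUnion fun y => (T y).atomLocs.toFinset).biUnion fun q =>
    (Finset.Icc 2 (copyCount Z T q + 1)).image fun i => (q, i))

/-- The successor computation on nodes:  time elapse, guard intersection,
reset/deactivation with fresh variables, and renaming (canonicalization is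
semantically transparent).  `T` assigns to every variable of the node a
disjunct of the transition formula of its location on the letter `a`.  If a
chosen disjunct is `false`, the target is discarded; if all chosen disjuncts
are `true`, the successor is the special empty node. -/
def Succ (𝒜 : OneATA Q A) (Z : SemZone Q) (IA : Finset (Q × ℕ)) (a : A)
    (T : Q × ℕ → TF Q) (Z' : SemZone Q) (IA' : Finset (Q × ℕ)) : Prop :=
  (∀ y ∈ Z.vars ∪ IA, 𝒜.isTarget y.1 a (T y)) ∧
  (∀ y ∈ Z.vars ∪ IA, T y ≠ TF.ff) ∧
  ((∀ y ∈ Z.vars ∪ IA, T y = TF.tt) → (Z' = emptySemZone ∧ IA' = ∅)) ∧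
  ((¬ ∀ y ∈ Z.vars ∪ IA, T y = TF.tt) →
    IA' = succIA Z IA T ∧
    Z'.vars = succVars Z IA T ∧
    ∃ g : (Q × ℕ) → Q → ℕ,
      (∀ y ∈ Z.vars, ∀ q ∈ (T y).atomLocs, 2 ≤ g y q ∧ g y q ≤ copyCount Z T q + 1) ∧
      (∀ y₁ ∈ Z.vars, ∀ y₂ ∈ Z.vars, ∀ q, q ∈ (T y₁).atomLocs → q ∈ (T y₂).atomLocs →
        g y₁ q = g y₂ q → y₁ = y₂) ∧
      Z'.val = fun ν' => ∃ (ν : (Q × ℕ) → ℝ≥0) (d : ℝ≥0), Z.val ν ∧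
        (∀ y ∈ Z.vars, ∀ I ∈ (T y).topGuards, I.mem (ν y + d)) ∧
        (∀ y ∈ Z.vars ∪ IA, ∀ q ∈ (T y).resetLocs, ν' (q, 1) = 0) ∧
        (∀ y ∈ Z.vars, ∀ q ∈ (T y).atomLocs, ν' (q, g y q) = ν y + d))

/-- Time elapse on a single state. -/
noncomputable def stDelay (s : Q × Option ℝ≥0) (d : ℝ≥0) : Q × Option ℝ≥0 :=
  (s.1, s.2.map (· + d))

/-- `γ →^{d,a,(C₁,…,C_m)} γ'` where the disjuncts chosen in the step correspond,
via a surjection witnessing `γ ∈ ⟦(Z,IA)⟧`, to the target tuple `T` of the node. -/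
def StepMatching (𝒜 : OneATA Q A) (Z : SemZone Q) (IA : Finset (Q × ℕ))
    (γ : Config Q) (d : ℝ≥0) (a : A) (T : Q × ℕ → TF Q) (γ' : Config Q) : Prop :=
  ∃ h χ, NodeSatVia Z IA γ h ∧
    (∀ y ∈ Z.vars ∪ IA, χ (stDelay (h y) d) = T y) ∧
    𝒜.Step γ d a χ γ'

/-- Reachability in the zone graph. -/
inductive ZReach (𝒜 : OneATA Q A) :
    SemZone Q × Finset (Q × ℕ) → SemZone Q × Finset (Q × ℕ) → Prop
  | refl (n) : ZReach 𝒜 n n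
  | step {n₁ n₂ n₃} (a : A) (T) :
      ZReach 𝒜 n₁ n₂ → Succ 𝒜 n₂.1 n₂.2 a T n₃.1 n₃.2 → ZReach 𝒜 n₁ n₃

/-- A node is accepting if the locations of all its variables are accepting. -/
def AccNode (𝒜 : OneATA Q A) (Z : SemZone Q) (IA : Finset (Q × ℕ)) : Prop :=
  ∀ y ∈ Z.vars ∪ IA, y.1 ∈ 𝒜.final

/-! ### Entailment between nodes -/

/-- Node entailment `(Z,IA) ⊨_M (Z',IA')`. -/
def NodeEntails (M : ℕ) (Z : SemZone Q) (IA : Finset (Q × ℕ))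
    (Z' : SemZone Q) (IA' : Finset (Q × ℕ)) : Prop :=
  ∀ γ', NodeSat Z' IA' γ' → ∃ γ, NodeSat Z IA γ ∧ CfgEntails M γ γ'

/-- Classical region equivalence between valuations over the variable set `V`. -/
def ValRegEquiv (M : ℕ) (V : Finset (Q × ℕ)) (u u' : (Q × ℕ) → ℝ≥0) : Prop :=
  (∀ y ∈ V, ((u y ≤ (M : ℝ≥0)) ↔ (u' y ≤ (M : ℝ≥0))) ∧
    (u y ≤ (M : ℝ≥0) →
      (⌊(u y : ℝ)⌋ = ⌊(u' y : ℝ)⌋ ∧ (Int.fract (u y : ℝ) = 0 ↔ Int.fract (u' y : ℝ) = 0)))) ∧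
  (∀ y ∈ V, ∀ z ∈ V, u y ≤ (M : ℝ≥0) → u z ≤ (M : ℝ≥0) →
    (Int.fract (u y : ℝ) ≤ Int.fract (u z : ℝ) ↔
      Int.fract (u' y : ℝ) ≤ Int.fract (u' z : ℝ)))

/-- The bounded entailment check `(Z,IA) ⊨ᵇ_M (Z',IA')`, for zones over the same
variables, using the identity correspondence of variables. -/
def BoundedEntails (M : ℕ) (Z : SemZone Q) (IA : Finset (Q × ℕ))
    (Z' : SemZone Q) (IA' : Finset (Q × ℕ)) : Prop :=
  IA ⊆ IA' ∧ ∀ u', Z'.val u' → ∃ u, Z.val u ∧ ValRegEquiv M Z.vars u u'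

/-! ### Syntactic zones -/

/-- Comparison relations in zone constraints. -/
inductive ZRel | lt | le | gt | ge

def ZRel.holds : ZRel → ℝ → ℝ → Prop
  | .lt, x, y => x < y
  | .le, x, y => x ≤ y
  | .gt, x, y => x > y
  | .ge, x, y => x ≥ y

/-- A zone constraint: `y ∼ k` or `y − x ∼ k` with `k ∈ ℤ`. -/
inductive ZConstr (Q : Type*) where
  | single (y : Q × ℕ) (r : ZRel) (k : ℤ)
  | diff (y x : Q × ℕ) (r : ZRel) (k : ℤ)

def ZConstr.holds (ν : (Q × ℕ) → ℝ≥0) : ZConstr Q → Prop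
  | .single y r k => r.holds (ν y : ℝ) (k : ℝ)
  | .diff y x r k => r.holds ((ν y : ℝ) - (ν x : ℝ)) (k : ℝ)

/-- The variables occurring in a constraint. -/
def ZConstr.varsIn : ZConstr Q → List (Q × ℕ)
  | .single y _ _ => [y]
  | .diff y x _ _ => [y, x]

/-- A (syntactic) zone: a finite set of variables and a finite conjunction of
constraints. -/
structure Zone (Q : Type*) where
  vars : Finset (Q × ℕ)
  constrs : List (ZConstr Q)

def Zone.satBy (Z : Zone Q) (ν : (Q × ℕ) → ℝ≥0) : Prop :=
  ∀ c ∈ Z.constrs, c.holds ν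

/-- Constraints only mention variables of the zone. -/
def Zone.wf (Z : Zone Q) : Prop :=
  ∀ c ∈ Z.constrs, ∀ v ∈ c.varsIn, v ∈ Z.vars

/-- The semantic zone of a syntactic zone. -/
def Zone.toSem (Z : Zone Q) : SemZone Q := ⟨Z.vars, Z.satBy⟩

/-! ### The `N'_r` sets for the entailment check -/

/-- Location preserving one-to-one mapping from `Var(Z)` to `Var(Z')`. -/
def LocPresInj (Z Z' : Zone Q) (r : Q × ℕ → Q × ℕ) : Prop :=
  Set.InjOn r ↑Z.vars ∧ (∀ y ∈ Z.vars, r y ∈ Z'.vars) ∧ ∀ y ∈ Z.vars, (r y).1 = y.1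

/-- `γ' ∈ N'_r` : `γ'` satisfies `(Z', IA')` via a surjection whose induced
valuation, transported back along `r`, is region equivalent to no valuation
satisfying `Z`. -/
def InNr (M : ℕ) (Z Z' : Zone Q) (IA' : Finset (Q × ℕ))
    (r : Q × ℕ → Q × ℕ) (γ' : Config Q) : Prop :=
  ∃ (h' : Q × ℕ → Q × Option ℝ≥0) (ν' : (Q × ℕ) → ℝ≥0),
    (∀ y ∈ Z'.vars ∪ IA', (h' y).1 = y.1) ∧
    (∀ y ∈ Z'.vars ∪ IA', h' y ∈ γ') ∧
    (∀ s ∈ γ', ∃ y ∈ Z'.vars ∪ IA', h' y = s) ∧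
    (∀ y ∈ IA', (h' y).2 = none) ∧
    (∀ y ∈ Z'.vars, (h' y).2 = some (ν' y)) ∧
    Z'.satBy ν' ∧
    ∀ ν, Z.satBy ν → ¬ ValRegEquiv M Z.vars ν (fun y => ν' (r y))

end ZoneDefs


/-! ## The zones `Z_φ` and `Z'_φ` constructed from a monotone 3-CNF formula -/

/-- The two locations `q_x` and `q_y`. -/
inductive XY | qx | qy
deriving DecidableEq

/-- The zone variables used in the reduction, for a formula with `m` clauses:
`px_j, py_j, nx_j, ny_j` (dummy clauses), `x^i_j, y^i_j` (clause literals) for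
`Z'_φ`, and `x⁺_j, y⁺_j, x⁻_j, y⁻_j` for `Z_φ`. -/
inductive MVar (m : ℕ) where
  | px (j : Fin 3)
  | py (j : Fin 3)
  | nx (j : Fin 3)
  | ny (j : Fin 3)
  | xc (i : Fin m) (j : Fin 3)
  | yc (i : Fin m) (j : Fin 3)
  | xp (j : Fin 3)
  | yp (j : Fin 3)
  | xm (j : Fin 3)
  | ym (j : Fin 3)
deriving DecidableEq

section Mono

variable {m : ℕ}

/-- The location of each variable. -/
def MVar.loc : MVar m → XY
  | .px _ | .nx _ | .xc _ _ | .xp _ | .xm _ => .qx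
  | .py _ | .ny _ | .yc _ _ | .yp _ | .ym _ => .qy

def MVar.inZ : MVar m → Prop
  | .xp _ | .yp _ | .xm _ | .ym _ => True
  | _ => False

/-- The variables of `Z_φ`. -/
def ZVars (m : ℕ) : Set (MVar m) := {y | y.inZ}

/-- The variables of `Z'_φ`. -/
def Z'Vars (m : ℕ) : Set (MVar m) := {y | ¬ y.inZ}

/-- `γ` satisfies the node `(Z, ∅)` (zone given semantically by the predicate
`P` on valuations, over the variable set `V`) via the surjection `h`. -/
def MSat (V : Set (MVar m)) (P : (MVar m → ℝ≥0) → Prop) (γ : Config XY)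
    (h : MVar m → XY × Option ℝ≥0) : Prop :=
  (∀ y ∈ V, (h y).1 = y.loc) ∧
  (∀ y ∈ V, h y ∈ γ) ∧
  (∀ s ∈ γ, ∃ y ∈ V, h y = s) ∧
  ∃ ν : MVar m → ℝ≥0, (∀ y ∈ V, (h y).2 = some (ν y)) ∧ P ν

/-- The constraints of the zone `Z_φ` (with `k` positive clauses and `m`
clauses in total). -/
def ZphiSat (m k : ℕ) (ν : MVar m → ℝ≥0) : Prop :=
  (∀ j : Fin 3, 0 ≤ (ν (.yp j) : ℝ) - ν (.xp j) ∧ (ν (.yp j) : ℝ) - ν (.xp j) ≤ 1) ∧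
  (∀ j : Fin 3, 1 < (ν (.ym j) : ℝ) - ν (.xm j) ∧ (ν (.ym j) : ℝ) - ν (.xm j) ≤ 2) ∧
  (∀ j : Fin 2, 1 ≤ (ν (.xp j.succ) : ℝ) - ν (.yp j.castSucc) ∧
      (ν (.xp j.succ) : ℝ) - ν (.yp j.castSucc) ≤ 5) ∧
  (∀ j : Fin 2, 1 ≤ (ν (.xm j.succ) : ℝ) - ν (.ym j.castSucc) ∧
      (ν (.xm j.succ) : ℝ) - ν (.ym j.castSucc) ≤ 5) ∧
  ((ν (.yp 2) : ℝ) < 14 * ((k : ℝ) + 1) - 2) ∧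
  ((ν (.xm 0) : ℝ) > 14 * ((k : ℝ) + 1) - 2) ∧
  ((ν (.ym 2) : ℝ) - ν (.xp 0) < 14 * ((m : ℝ) + 2) - 6)

/-- The constraints of the zone `Z'_φ`, for a monotone 3-CNF formula whose
`i`-th clause has literals on the propositional variables `lits i 0`,
`lits i 1`, `lits i 2`. -/
def Z'phiSat (m : ℕ) {PV : Type*} (lits : Fin m → Fin 3 → PV)
    (ν : MVar m → ℝ≥0) : Prop :=
  (∀ j : Fin 3, (ν (.px j) : ℝ) = 3 * (j : ℕ) ∧ (ν (.py j) : ℝ) = 3 * (j : ℕ)) ∧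
  (∀ j : Fin 3, (ν (.nx j) : ℝ) = 14 * ((m : ℝ) + 1) + 3 * (j : ℕ) ∧
      (ν (.ny j) : ℝ) = 14 * ((m : ℝ) + 1) + 3 * (j : ℕ) + 2) ∧
  (∀ (i : Fin m) (j : Fin 3),
      14 * ((i : ℕ) + 1 : ℝ) + 3 * (j : ℕ) ≤ (ν (.xc i j) : ℝ) ∧
      (ν (.xc i j) : ℝ) ≤ 14 * ((i : ℕ) + 1 : ℝ) + 3 * (j : ℕ) + 2 ∧
      14 * ((i : ℕ) + 1 : ℝ) + 3 * (j : ℕ) ≤ (ν (.yc i j) : ℝ) ∧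
      (ν (.yc i j) : ℝ) ≤ 14 * ((i : ℕ) + 1 : ℝ) + 3 * (j : ℕ) + 2 ∧
      (ν (.xc i j) : ℝ) ≤ (ν (.yc i j) : ℝ)) ∧
  (∀ (i i' : Fin m) (j j' : Fin 3), lits i j = lits i' j' →
      (ν (.xc i' j') : ℝ) - ν (.xc i j) = 14 * (((i' : ℕ) : ℝ) - ((i : ℕ) : ℝ)) +
        3 * (((j' : ℕ) : ℝ) - ((j : ℕ) : ℝ)) ∧
      (ν (.yc i' j') : ℝ) - ν (.yc i j) = 14 * (((i' : ℕ) : ℝ) - ((i : ℕ) : ℝ)) +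
        3 * (((j' : ℕ) : ℝ) - ((j : ℕ) : ℝ)))

/-- The (real) value of a state of a configuration. -/
noncomputable def sval (s : XY × Option ℝ≥0) : ℝ := ((s.2.getD 0 : ℝ≥0) : ℝ)

/-- The assignment `α_{γ'}` extracted from a surjection `h'` witnessing that a
configuration satisfies `(Z'_φ, ∅)`: a propositional variable is true iff the
difference `y − x` of (one of) its literal occurrences exceeds 1. -/
def alphaOf {PV : Type*} (lits : Fin m → Fin 3 → PV)
    (h' : MVar m → XY × Option ℝ≥0) (p : PV) : Prop :=
  ∃ (i : Fin m) (j : Fin 3), lits i j = p ∧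
    1 < sval (h' (.yc i j)) - sval (h' (.xc i j))

/-- The assignment `α` falsifies clause `C_i` (clauses `C_1, …, C_k` are
positive, the rest negative): all of its literals are false. -/
def Falsifies {PV : Type*} (k : ℕ) (lits : Fin m → Fin 3 → PV)
    (α : PV → Prop) (i : Fin m) : Prop :=
  if (i : ℕ) < k then ∀ j : Fin 3, ¬ α (lits i j) else ∀ j : Fin 3, α (lits i j)

/-- The monotone 3-CNF formula is satisfiable. -/
def MonoSatisfiable {PV : Type*} (k : ℕ) (lits : Fin m → Fin 3 → PV) : Prop :=
  ∃ α : PV → Prop, ∀ i : Fin m, ¬ Falsifies k lits α i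

end Mono

/-!
A configuration is encoded, up to region equivalence, as a word over a finite alphabet: one
letter for its integral and inactive states, one letter per fractional part of its fractional
states (in increasing order), and one letter per state above `M`. If the word of `γ` is a
subword of the word of `γ'`, matching letters gives a region equivalence between `γ` and a
subset of `γ'`, i.e. `γ ⊨_M γ'`. The configurations of a node have at most `|Var(Z) ∪ IA|`
states, so a node has only finitely many words.

It then suffices that the Smyth order on finite sets of words (`W ≤ W'` iff every word of `W'`
has a subword in `W`) is a well-quasi-order. The words avoiding a finite set `R` form a finite
union of products of languages `B*` and `{ε, c}` whose factors range over a finite family, and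
Higman's lemma, applied to the factor lists and then to the lists of products, yields `i < j`
such that every product for `Fᵢ` is dominated by one for `Fⱼ`; so the words avoiding `Fᵢ`
avoid `Fⱼ`.
-/

open List

lemma finite_setOf_forall_mem_length_le {α : Type*} {L : Set α} (hL : L.Finite) (n : ℕ) :
    {w : List α | (∀ c ∈ w, c ∈ L) ∧ w.length ≤ n}.Finite := by
  have := hL.to_subtype
  refine ((List.finite_length_le L n).image (List.map Subtype.val)).subset ?_
  rintro w ⟨hw, hn⟩
  lift w to List L using hw
  exact ⟨w, by simpa using hn, rfl⟩

lemma exists_mem_of_sublistForall₂ {β : Type*} {r : β → β → Prop} {l l' : List β}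
    (h : SublistForall₂ r l l') {a : β} (ha : a ∈ l) : ∃ b ∈ l', r a b := by
  induction h with
  | nil => simp at ha
  | @cons a' b _ _ hab _ ih =>
    rcases mem_cons.1 ha with rfl | ha
    · exact ⟨b, mem_cons_self, hab⟩
    · obtain ⟨b', hb', h'⟩ := ih ha
      exact ⟨b', mem_cons_of_mem b hb', h'⟩
  | @cons_right b _ _ _ ih =>
    obtain ⟨b', hb', h'⟩ := ih ha
    exact ⟨b', mem_cons_of_mem b hb', h'⟩

lemma exists_strictMonoOn_of_map_sublist_map {α β : Type*} [LinearOrder α] {f g : α → β} :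
    ∀ {l l' : List α}, l.Pairwise (· < ·) → l'.Pairwise (· < ·) → l.map f <+ l'.map g →
      ∃ φ : α → α, StrictMonoOn φ {x | x ∈ l} ∧ ∀ x ∈ l, φ x ∈ l' ∧ g (φ x) = f x
  | l, [], _, _, h => by
    rw [List.map_nil, List.sublist_nil, List.map_eq_nil_iff] at h
    subst h
    exact ⟨id, fun x hx => absurd hx List.not_mem_nil, by simp⟩
  | l, b :: l', hl, hbl', h => by
    obtain ⟨hb, hl'⟩ := List.pairwise_cons.1 hbl'
    rcases List.sublist_cons_iff.1 h with h | ⟨r, hr, h⟩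
    · obtain ⟨φ, hφ, hφl⟩ := exists_strictMonoOn_of_map_sublist_map hl hl' h
      exact ⟨φ, hφ, fun x hx => ⟨List.mem_cons_of_mem b (hφl x hx).1, (hφl x hx).2⟩⟩
    · obtain ⟨a, l, rfl⟩ : ∃ a l₀, l = a :: l₀ :=
        exists_cons_of_ne_nil (by rintro rfl; simp at hr)
      obtain ⟨hab, rfl⟩ := List.cons_eq_cons.1 hr
      obtain ⟨ha, hl⟩ := List.pairwise_cons.1 hl
      obtain ⟨φ, hφ, hφl⟩ := exists_strictMonoOn_of_map_sublist_map hl hl' h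
      have hne : ∀ x ∈ l, x ≠ a := fun x hx => (ha x hx).ne'
      refine ⟨fun x => if x = a then b else φ x, ?_, fun x hx => ?_⟩
      · intro x hx y hy hxy
        simp only [Set.mem_ofPred_eq, mem_cons] at hx hy
        rcases hx with rfl | hx <;> rcases hy with rfl | hy
        · exact absurd hxy (lt_irrefl _)
        · simpa [hne y hy] using hb _ (hφl y hy).1
        · exact absurd (ha x hx) (not_lt.2 hxy.le)
        · simpa [hne x hx, hne y hy] using hφ hx hy hxy
      · rcases mem_cons.1 hx with rfl | hx
        · simpa using hab.symm
        · simpa [hne x hx] using And.imp_left Or.inr (hφl x hx)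

lemma strictMonoOn_insert_update {α β : Type*} [LinearOrder α] [Preorder β] [DecidableEq α]
    {φ : α → β} {S : Set α} {a : α} {b : β} (hφ : StrictMonoOn φ S) (ha : ∀ x ∈ S, a < x)
    (hb : ∀ x ∈ S, b < φ x) : StrictMonoOn (Function.update φ a b) (insert a S) := by
  have hne : ∀ x ∈ S, x ≠ a := fun x hx => (ha x hx).ne'
  intro x hx y hy hxy
  rcases hx with rfl | hx <;> rcases hy with rfl | hy
  · exact absurd hxy (lt_irrefl _)
  · simpa [hne y hy] using hb y hy
  · exact absurd (ha x hx) (not_lt.2 hxy.le)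
  · simpa [hne x hx, hne y hy] using hφ hx hy hxy

theorem exists_injOn_of_card_filter_le {α κ : Type*} [DecidableEq κ] {s t : Finset α} {f g : α → κ}
    (h : ∀ k, (s.filter (f · = k)).card ≤ (t.filter (g · = k)).card) :
    ∃ F : α → α, Set.MapsTo F s t ∧ Set.InjOn F s ∧ ∀ a ∈ s, g (F a) = f a := by
  have e := fun k => (Function.Embedding.nonempty_of_card_le (α := s.filter (f · = k))
    (β := t.filter (g · = k)) (by simpa using h k)).some
  set F : α → α := fun a => if ha : a ∈ s then e (f a) ⟨a, by simp [ha]⟩ else a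
  have hF : ∀ a k (hk : a ∈ s.filter (f · = k)), F a = e k ⟨a, hk⟩ := by
    intro a k hk
    obtain ⟨ha, rfl⟩ := Finset.mem_filter.1 hk
    simp [F, ha]
  have hkey : ∀ a ∈ s, F a ∈ t ∧ g (F a) = f a := fun a ha => by
    rw [hF a (f a) (by simp [ha])]
    exact Finset.mem_filter.1 (e _ _).2
  refine ⟨F, fun a ha => (hkey a ha).1, fun a ha b hb hab => ?_, fun a ha => (hkey a ha).2⟩
  rw [Finset.mem_coe] at ha hb
  have hfab : f b = f a := by rw [← (hkey a ha).2, ← (hkey b hb).2, hab]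
  rw [hF a (f a) (by simp [ha]), hF b (f a) (by simp [hb, hfab])] at hab
  exact congrArg Subtype.val ((e (f a)).injective (Subtype.ext hab))

section Avoiders

variable {α : Type*}

def avoiders (R : Finset (List α)) : Language α := {w | ∀ u ∈ R, ¬ u <+ w}

noncomputable def residual (R : Finset (List α)) (c : α) : Finset (List α) :=
  R ∪ R.preimage (c :: ·) cons_injective.injOn

def stableLetters (R : Finset (List α)) : Set α := {c | residual R c = R}

noncomputable def letters (R : Finset (List α)) : Finset α := R.biUnion List.toFinset

noncomputable def suffixClosure (R : Finset (List α)) : Finset (List α) :=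
  R.biUnion fun u => u.tails.toFinset

def starOf (B : Set α) : Language α := {w | ∀ c ∈ w, c ∈ B}

def optLetter (c : α) : Language α := {[], [c]}

variable {R : Finset (List α)} {c : α}

lemma mem_residual {v : List α} : v ∈ residual R c ↔ v ∈ R ∨ c :: v ∈ R := by
  simp [residual]

lemma subset_residual : R ⊆ residual R c := Finset.subset_union_left

lemma avoiders_residual_le : avoiders (residual R c) ≤ avoiders R :=
  fun _ hw u hu => hw u (subset_residual hu)

lemma cons_mem_avoiders {w : List α} : c :: w ∈ avoiders R ↔ w ∈ avoiders (residual R c) := by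
  constructor
  · intro h v hv hvw
    rcases mem_residual.1 hv with hv | hv
    · exact h v hv (hvw.trans (sublist_cons_self c w))
    · exact h _ hv (hvw.cons_cons c)
  · intro h u hu huw
    rcases sublist_cons_iff.1 huw with huw | ⟨t, rfl, htw⟩
    · exact h u (mem_residual.2 (Or.inl hu)) huw
    · exact h t (mem_residual.2 (Or.inr hu)) htw

lemma nil_mem_avoiders : [] ∈ avoiders R ↔ [] ∉ R := by
  show (∀ u ∈ R, ¬ u <+ []) ↔ [] ∉ R
  simp

lemma append_mem_avoiders {x y : List α} (hx : x ∈ starOf (stableLetters R)) :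
    x ++ y ∈ avoiders R ↔ y ∈ avoiders R := by
  induction x with
  | nil => rfl
  | cons d x ih =>
    have hd : residual R d = R := hx d mem_cons_self
    rw [cons_append, cons_mem_avoiders, hd, ih fun e he => hx e (mem_cons_of_mem d he)]

lemma mem_letters_of_residual_ne (h : residual R c ≠ R) : c ∈ letters R := by
  contrapose! h
  refine Finset.Subset.antisymm (fun v hv => ?_) subset_residual
  refine (mem_residual.1 hv).resolve_right fun hcv => h ?_
  exact Finset.mem_biUnion.2 ⟨_, hcv, by simp⟩

lemma letters_residual_subset : letters (residual R c) ⊆ letters R := by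
  intro d hd
  obtain ⟨v, hv, hdv⟩ := Finset.mem_biUnion.1 hd
  rcases mem_residual.1 hv with hv | hv
  · exact Finset.mem_biUnion.2 ⟨v, hv, hdv⟩
  · exact Finset.mem_biUnion.2 ⟨_, hv, by simp_all⟩

lemma mem_suffixClosure {v : List α} : v ∈ suffixClosure R ↔ ∃ u ∈ R, v <:+ u := by
  simp [suffixClosure]

lemma subset_suffixClosure : R ⊆ suffixClosure R :=
  fun u hu => mem_suffixClosure.2 ⟨u, hu, suffix_refl u⟩

lemma suffixClosure_residual_subset : suffixClosure (residual R c) ⊆ suffixClosure R := by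
  intro t ht
  obtain ⟨v, hv, htv⟩ := mem_suffixClosure.1 ht
  rcases mem_residual.1 hv with hv | hv
  · exact mem_suffixClosure.2 ⟨v, hv, htv⟩
  · exact mem_suffixClosure.2 ⟨_, hv, htv.trans (suffix_cons c v)⟩

/-- Residuals only add suffixes of words of `R`. -/
lemma card_sub_card_residual_lt (h : residual R c ≠ R) :
    (suffixClosure (residual R c)).card - (residual R c).card <
      (suffixClosure R).card - R.card := by
  have hlt : R.card < (residual R c).card :=
    Finset.card_lt_card (Finset.ssubset_iff_subset_ne.2 ⟨subset_residual, Ne.symm h⟩)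
  have h₁ := Finset.card_le_card (suffixClosure_residual_subset (R := R) (c := c))
  have h₂ := Finset.card_le_card (subset_suffixClosure (R := residual R c))
  omega

end Avoiders

section Patterns

variable {α : Type*}

/-- The words avoiding `R` form a finite union of products of languages `B*` and `{[], [c]}`,
each product given by its list of factors. Every factor contains `[]`, so the product only
grows when factors are inserted. -/
noncomputable def patterns (R : Finset (List α)) : List (List (Language α)) :=
  if [] ∈ R then [] else
    ([] :: (letters R).toList.flatMap fun c =>
      if residual R c = R then [] else
        (patterns (residual R c)).map (optLetter c :: ·)).map (starOf (stableLetters R) :: ·)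
termination_by (suffixClosure R).card - R.card
decreasing_by exact card_sub_card_residual_lt ‹_›

lemma mem_patterns {P : List (Language α)} :
    P ∈ patterns R ↔ [] ∉ R ∧ (P = [starOf (stableLetters R)] ∨
      ∃ c, residual R c ≠ R ∧ ∃ P₀ ∈ patterns (residual R c),
        P = starOf (stableLetters R) :: optLetter c :: P₀) := by
  rw [patterns]
  split_ifs with hR
  · simp [hR]
  · simp only [hR, not_false_eq_true, true_and, mem_map, mem_cons, mem_flatMap,
      Finset.mem_toList]
    constructor
    · rintro ⟨Q, rfl | ⟨d, -, hQ⟩, rfl⟩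
      · exact Or.inl rfl
      · split_ifs at hQ with hd
        · simp at hQ
        · obtain ⟨P₀, hP₀, rfl⟩ := mem_map.1 hQ
          exact Or.inr ⟨d, hd, P₀, hP₀, rfl⟩
    · rintro (rfl | ⟨d, hd, P₀, hP₀, rfl⟩)
      · exact ⟨[], Or.inl rfl, rfl⟩
      · refine ⟨optLetter d :: P₀, Or.inr ⟨d, mem_letters_of_residual_ne hd, ?_⟩, rfl⟩
        rw [if_neg hd]
        exact mem_map_of_mem hP₀

theorem prod_le_avoiders {R : Finset (List α)} {P : List (Language α)}
    (hP : P ∈ patterns R) :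
    P.prod ≤ avoiders R := by
  obtain ⟨hR, rfl | ⟨c, hc, P₀, hP₀, rfl⟩⟩ := mem_patterns.1 hP
  · intro w hw
    obtain ⟨x, hx, y, hy, rfl⟩ := Language.mem_mul.1 hw
    show x ++ y ∈ avoiders R
    rw [(Language.mem_one y).1 hy, append_mem_avoiders hx]
    exact nil_mem_avoiders.2 hR
  · intro w hw
    obtain ⟨x, hx, _, hab, rfl⟩ := Language.mem_mul.1 hw
    obtain ⟨a, ha, b, hb, rfl⟩ := Language.mem_mul.1 hab
    have hb' : b ∈ avoiders (residual R c) := prod_le_avoiders hP₀ hb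
    show x ++ (a ++ b) ∈ avoiders R
    rw [append_mem_avoiders hx]
    rcases ha with rfl | rfl
    · exact avoiders_residual_le hb'
    · exact cons_mem_avoiders.2 hb'
termination_by (suffixClosure R).card - R.card
decreasing_by exact card_sub_card_residual_lt hc

theorem exists_mem_patterns {R : Finset (List α)} {w : List α} (hw : w ∈ avoiders R) :
    ∃ P ∈ patterns R, w ∈ P.prod := by
  have hR : [] ∉ R := nil_mem_avoiders.1 fun u hu hsub => hw u hu (hsub.trans (nil_sublist w))
  set p : α → Bool := fun d => decide (d ∈ stableLetters R)
  have hx : w.takeWhile p ∈ starOf (stableLetters R) := fun d hd => by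
    simpa [p] using mem_takeWhile_imp hd
  have hy : w.dropWhile p ∈ avoiders R := by
    rw [← append_mem_avoiders hx, takeWhile_append_dropWhile]
    exact hw
  rcases hdrop : w.dropWhile p with _ | ⟨c, y⟩
  · refine ⟨_, mem_patterns.2 ⟨hR, Or.inl rfl⟩, Language.mem_mul.2 ⟨w.takeWhile p, hx, [], rfl, ?_⟩⟩
    rw [← hdrop, takeWhile_append_dropWhile]
  · have hc : c ∉ stableLetters R := by
      have := head?_dropWhile_not p w
      rw [hdrop] at this
      simpa [p] using this
    rw [hdrop, cons_mem_avoiders] at hy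
    obtain ⟨P₀, hP₀, hyP₀⟩ := exists_mem_patterns hy
    have hcy : c :: y ∈ (optLetter c :: P₀).prod :=
      Language.mem_mul.2 ⟨[c], Or.inr rfl, y, hyP₀, rfl⟩
    refine ⟨_, mem_patterns.2 ⟨hR, Or.inr ⟨c, hc, P₀, hP₀, rfl⟩⟩,
      Language.mem_mul.2 ⟨w.takeWhile p, hx, c :: y, hcy, ?_⟩⟩
    rw [← hdrop, takeWhile_append_dropWhile]
termination_by (suffixClosure R).card - R.card
decreasing_by exact card_sub_card_residual_lt hc

def patternAtoms (L : Set α) : Set (Language α) := optLetter '' L ∪ starOf '' {B | Bᶜ ⊆ L}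

lemma patternAtoms_finite {L : Set α} (hL : L.Finite) : (patternAtoms L).Finite :=
  (hL.image _).union <| ((hL.finite_subsets.image compl).subset fun B hB =>
    ⟨Bᶜ, hB, compl_compl B⟩).image _

lemma one_le_of_mem_patternAtoms {L : Set α} {A : Language α} (hA : A ∈ patternAtoms L) :
    1 ≤ A := by
  rintro _ rfl
  rcases hA with ⟨c, -, rfl⟩ | ⟨B, -, rfl⟩
  · exact Or.inl rfl
  · exact fun _ h => absurd h not_mem_nil

theorem mem_patternAtoms {L : Set α} {R : Finset (List α)} (hR : ↑(letters R) ⊆ L)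
    {P : List (Language α)} (hP : P ∈ patterns R) {A : Language α} (hA : A ∈ P) :
    A ∈ patternAtoms L := by
  have hstar : starOf (stableLetters R) ∈ patternAtoms L :=
    Or.inr ⟨_, fun c hc => hR (mem_letters_of_residual_ne hc), rfl⟩
  obtain ⟨-, rfl | ⟨c, hc, P₀, hP₀, rfl⟩⟩ := mem_patterns.1 hP
  · rw [mem_singleton.1 hA]
    exact hstar
  · rcases mem_cons.1 hA with rfl | hA
    · exact hstar
    rcases mem_cons.1 hA with rfl | hA
    · exact Or.inl ⟨c, hR (mem_letters_of_residual_ne hc), rfl⟩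
    · exact mem_patternAtoms ((Finset.coe_subset.2 letters_residual_subset).trans hR) hP₀ hA
termination_by (suffixClosure R).card - R.card
decreasing_by exact card_sub_card_residual_lt hc

theorem exists_lt_forall_exists_sublist {L : Set α} (hL : L.Finite) {F : ℕ → Set (List α)}
    (hfin : ∀ n, (F n).Finite) (hF : ∀ n, ∀ w ∈ F n, ∀ c ∈ w, c ∈ L) :
    ∃ i j, i < j ∧ ∀ w' ∈ F j, ∃ w ∈ F i, w <+ w' := by
  have : IsPreorder (List (Language α)) (SublistForall₂ (· ≤ ·)) := {}
  have hwqo := (patternAtoms_finite hL).partiallyWellOrderedOn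
    |>.partiallyWellOrderedOn_sublistForall₂ (· ≤ ·)
    |>.partiallyWellOrderedOn_sublistForall₂ (SublistForall₂ (· ≤ ·))
  have hatoms : ∀ n, ∀ P ∈ patterns (hfin n).toFinset, ∀ A ∈ P, A ∈ patternAtoms L :=
    fun n P hP A hA => mem_patternAtoms (fun c hc => by
      obtain ⟨w, hw, hcw⟩ := Finset.mem_biUnion.1 hc
      exact hF n w ((hfin n).mem_toFinset.1 hw) c (List.mem_toFinset.1 hcw)) hP hA
  obtain ⟨i, j, hij, hsub⟩ := hwqo.exists_lt (f := fun n => patterns (hfin n).toFinset) hatoms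
  refine ⟨i, j, hij, fun w' hw' => ?_⟩
  by_contra! hno
  obtain ⟨P, hP, hwP⟩ := exists_mem_patterns (R := (hfin i).toFinset) (w := w')
    fun u hu => hno u ((hfin i).mem_toFinset.1 hu)
  obtain ⟨P', hP', hPP'⟩ := exists_mem_of_sublistForall₂ hsub hP
  have hwP' := hPP'.prod_le_prod'
    (fun A hA => one_le_of_mem_patternAtoms (hatoms j P' hP' A hA)) hwP
  exact prod_le_avoiders hP' hwP' w' ((hfin j).mem_toFinset.2 hw') (Sublist.refl w')

end Patterns

section RegionKey

variable {Q : Type*} {M : ℕ}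

/-- The region of a state `(q, v)` for the constant `M`, with the fractional part of `v`
relabelled by `φ`: `none` for `v = ⊥`, `some none` for `v > M`. -/
noncomputable def regionKey (M : ℕ) (φ : ℝ → ℝ) (s : Q × Option ℝ≥0) :
    Q × Option (Option (ℤ × ℝ)) :=
  (s.1, s.2.map fun r => if r ≤ (M : ℝ≥0) then some (⌊(r : ℝ)⌋, φ (Int.fract (r : ℝ))) else none)

variable {φ : ℝ → ℝ} {S : Set ℝ}

lemma regionKey_snd_eq_none {s : Q × Option ℝ≥0} : (regionKey M φ s).2 = none ↔ s.2 = none :=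
  Option.map_eq_none_iff

lemma regionKey_of_eq_some {s : Q × Option ℝ≥0} {r : ℝ≥0} (hs : s.2 = some r) :
    regionKey M φ s =
      (s.1, some (if r ≤ (M : ℝ≥0) then some (⌊(r : ℝ)⌋, φ (Int.fract (r : ℝ))) else none)) := by
  rw [regionKey, hs]
  rfl

lemma regionKey_eq_big_iff {ψ : ℝ → ℝ} {s : Q × Option ℝ≥0} {q : Q} :
    regionKey M φ s = (q, some none) ↔ regionKey M ψ s = (q, some none) := by
  obtain ⟨q', _ | r⟩ := s
  · exact Iff.rfl
  · rw [regionKey_of_eq_some rfl, regionKey_of_eq_some rfl]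
    split_ifs <;> simp

lemma value_of_regionKey_eq {s t : Q × Option ℝ≥0} {r r' : ℝ≥0}
    (h : regionKey M id t = regionKey M φ s) (hs : s.2 = some r) (ht : t.2 = some r') :
    (r' ≤ (M : ℝ≥0) ↔ r ≤ (M : ℝ≥0)) ∧ (r ≤ (M : ℝ≥0) →
      ⌊(r' : ℝ)⌋ = ⌊(r : ℝ)⌋ ∧ Int.fract (r' : ℝ) = φ (Int.fract (r : ℝ))) := by
  rw [regionKey_of_eq_some hs, regionKey_of_eq_some ht] at h
  have h2 := Option.some.inj (Prod.ext_iff.1 h).2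
  by_cases h₁ : r' ≤ (M : ℝ≥0) <;> by_cases h₂ : r ≤ (M : ℝ≥0) <;>
    simp only [h₁, h₂, if_true, if_false, reduceCtorEq, Option.some.injEq, Prod.mk.injEq,
      id] at h2
  · exact ⟨iff_of_true h₁ h₂, fun _ => h2⟩
  · exact ⟨iff_of_false h₁ h₂, fun h => absurd h h₂⟩

theorem regionEquivWith_of_regionKey_eq {γ : Config Q} {F : Q × Option ℝ≥0 → Q × Option ℝ≥0}
    (hφ : StrictMonoOn φ S) (h0 : 0 ∈ S) (hφ0 : φ 0 = 0)
    (hS : ∀ s ∈ γ, ∀ r, s.2 = some r → r ≤ (M : ℝ≥0) → Int.fract (r : ℝ) ∈ S)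
    (hF : Set.InjOn F γ) (hkey : ∀ s ∈ γ, regionKey M id (F s) = regionKey M φ s) :
    RegionEquivWith M γ (γ.image F) F := by
  refine ⟨by rw [Finset.coe_image]; exact hF.bijOn_image,
    fun s hs => (Prod.ext_iff.1 (hkey s hs)).1, fun s hs => ?_, fun s hs r r' hr hr' => ?_,
    fun s₁ hs₁ s₂ hs₂ r₁ r₂ r₁' r₂' h₁ h₂ h₁' h₂' hm₁ hm₂ => ?_⟩
  · rw [← regionKey_snd_eq_none (M := M) (φ := id), hkey s hs, regionKey_snd_eq_none]
  · obtain ⟨hle, hval⟩ := value_of_regionKey_eq (hkey s hs) hr hr'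
    refine ⟨hle.symm, fun hm => ⟨(hval hm).1.symm, ?_⟩⟩
    rw [(hval hm).2]
    exact ⟨fun h => by rw [h, hφ0], fun h => hφ.injOn (hS s hs r hr hm) h0 (h.trans hφ0.symm)⟩
  · rw [((value_of_regionKey_eq (hkey s₁ hs₁) h₁ h₁').2 hm₁).2,
      ((value_of_regionKey_eq (hkey s₂ hs₂) h₂ h₂').2 hm₂).2]
    exact (hφ.le_iff_le (hS s₁ hs₁ r₁ h₁ hm₁) (hS s₂ hs₂ r₂ h₂ hm₂)).symm

lemma eq_of_regionKey_eq (hφ : Set.InjOn φ S) {s t : Q × Option ℝ≥0}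
    (hs : ∀ r, s.2 = some r → r ≤ (M : ℝ≥0) → Int.fract (r : ℝ) ∈ S)
    (ht : ∀ r, t.2 = some r → r ≤ (M : ℝ≥0) → Int.fract (r : ℝ) ∈ S)
    (h : regionKey M φ s = regionKey M φ t) (hbig : (regionKey M φ s).2 ≠ some none) : s = t := by
  obtain ⟨q, _ | r⟩ := s <;> obtain ⟨q', _ | r'⟩ := t <;>
    simp only [regionKey, Option.map_none, Option.map_some, Prod.mk.injEq, reduceCtorEq,
      and_false] at h
  · rw [h.1]
  have hr : r ≤ (M : ℝ≥0) := by
    by_contra hr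
    rw [regionKey_of_eq_some rfl, if_neg hr] at hbig
    exact hbig rfl
  obtain ⟨rfl, h⟩ := h
  by_cases hr' : r' ≤ (M : ℝ≥0) <;>
    simp only [hr, hr', if_true, if_false, reduceCtorEq, Option.some.injEq, Prod.mk.injEq] at h
  have hfr := hφ (hs r rfl hr) (ht r' rfl hr') h.2
  have : (r : ℝ) = r' := by
    rw [← Int.floor_add_fract (r : ℝ), ← Int.floor_add_fract (r' : ℝ), h.1, hfr]
  rw [NNReal.coe_injective this]

lemma card_filter_regionKey_le {γ γ' : Config Q} (hφ : Set.InjOn φ S)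
    (hS : ∀ s ∈ γ, ∀ r, s.2 = some r → r ≤ (M : ℝ≥0) → Int.fract (r : ℝ) ∈ S)
    (hmem : ∀ s ∈ γ, (regionKey M φ s).2 ≠ some none →
      regionKey M φ s ∈ γ'.image (regionKey M id))
    (hbig : ∀ q, (γ.filter (regionKey M id · = (q, some none))).card ≤
      (γ'.filter (regionKey M id · = (q, some none))).card)
    (k : Q × Option (Option (ℤ × ℝ))) :
    (γ.filter (regionKey M φ · = k)).card ≤ (γ'.filter (regionKey M id · = k)).card := by
  obtain ⟨q, o⟩ := k
  by_cases hk : o = some none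
  · subst hk
    rw [Finset.filter_congr fun s _ => regionKey_eq_big_iff (ψ := id)]
    exact hbig q
  rcases (γ.filter (regionKey M φ · = (q, o))).eq_empty_or_nonempty with he | ⟨s, hs⟩
  · simp [he]
  obtain ⟨hsγ, hsk⟩ := Finset.mem_filter.1 hs
  obtain ⟨t, ht, htk⟩ := Finset.mem_image.1 (hmem s hsγ (by rw [hsk]; exact hk))
  calc (γ.filter (regionKey M φ · = (q, o))).card ≤ 1 := by
        refine Finset.card_le_one.2 fun a ha b hb => ?_
        obtain ⟨haγ, hak⟩ := Finset.mem_filter.1 ha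
        obtain ⟨hbγ, hbk⟩ := Finset.mem_filter.1 hb
        exact eq_of_regionKey_eq hφ (hS a haγ) (hS b hbγ) (hak.trans hbk.symm)
          (by rw [hak]; exact hk)
    _ ≤ (γ'.filter (regionKey M id · = (q, o))).card :=
        Finset.card_pos.2 ⟨t, Finset.mem_filter.2 ⟨ht, htk.trans hsk⟩⟩

theorem cfgEntails_of_regionKey {γ γ' : Config Q} (hφ : StrictMonoOn φ S) (h0 : 0 ∈ S)
    (hφ0 : φ 0 = 0) (hS : ∀ s ∈ γ, ∀ r, s.2 = some r → r ≤ (M : ℝ≥0) → Int.fract (r : ℝ) ∈ S)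
    (hmem : ∀ s ∈ γ, (regionKey M φ s).2 ≠ some none →
      regionKey M φ s ∈ γ'.image (regionKey M id))
    (hbig : ∀ q, (γ.filter (regionKey M id · = (q, some none))).card ≤
      (γ'.filter (regionKey M id · = (q, some none))).card) :
    CfgEntails M γ γ' := by
  obtain ⟨F, hmaps, hinj, hkey⟩ :=
    exists_injOn_of_card_filter_le (card_filter_regionKey_le hφ.injOn hS hmem hbig)
  exact ⟨γ.image F, Finset.image_subset_iff.2 hmaps, F,
    regionEquivWith_of_regionKey_eq hφ h0 hφ0 hS hinj hkey⟩

end RegionKey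

inductive RegionLetter (Q : Type*) where
  | head (integral : Finset (Q × ℤ)) (inactive : Finset Q)
  | frac (cls : Finset (Q × ℤ))
  | big (q : Q)

namespace RegionLetter

variable {Q : Type*}

def isHead : RegionLetter Q → Bool
  | head _ _ => true
  | _ => false

def isFrac : RegionLetter Q → Bool
  | frac _ => true
  | _ => false

def IsBounded (M : ℕ) : RegionLetter Q → Prop
  | head A _ | frac A => ∀ p ∈ A, p.2 ∈ Set.Icc (0 : ℤ) M
  | big _ => True

lemma finite_setOf_isBounded [Fintype Q] (M : ℕ) :
    {l : RegionLetter Q | l.IsBounded M}.Finite := by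
  set P : Set (Finset (Q × ℤ)) := {A | ∀ p ∈ A, p.2 ∈ Set.Icc (0 : ℤ) M}
  have hP : P.Finite := (Finset.univ ×ˢ Finset.Icc (0 : ℤ) M).powerset.finite_toSet.subset
    fun A hA => Finset.mem_powerset.2 fun p hp => by simpa using hA p hp
  refine (((hP.prod Set.finite_univ).image fun A => head A.1 A.2).union
    ((hP.image frac).union (Set.finite_range big))).subset ?_
  rintro (⟨A, B⟩ | A | q) hl
  · exact Or.inl ⟨(A, B), ⟨hl, trivial⟩, rfl⟩
  · exact Or.inr (Or.inl ⟨A, hl, rfl⟩)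
  · exact Or.inr (Or.inr ⟨q, rfl⟩)

end RegionLetter

section RegionWord

variable {Q : Type*} {M : ℕ}

noncomputable def regionClass (M : ℕ) (γ : Config Q) (f : ℝ) : Finset (Q × ℤ) :=
  (γ.image (regionKey M id)).preimage (fun p => (p.1, some (some (p.2, f))))
    fun _ _ _ _ h => by simpa [Prod.ext_iff] using h

noncomputable def inactiveLocs (M : ℕ) (γ : Config Q) : Finset Q :=
  (γ.image (regionKey M id)).preimage (fun q => (q, none)) fun _ _ _ _ h => by simpa using h

noncomputable def fracts (M : ℕ) (γ : Config Q) : Finset ℝ :=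
  ((γ.filter fun s => ∀ r ∈ s.2, r ≤ (M : ℝ≥0)).image
    fun s => Int.fract ((s.2.getD 0 : ℝ≥0) : ℝ)).erase 0

noncomputable def bigCount (M : ℕ) (γ : Config Q) (q : Q) : ℕ :=
  (γ.filter (regionKey M id · = (q, some none))).card

/-- Fractional classes are listed in increasing order of fractional part, so an embedding of
words preserves the order of fractional parts. -/
noncomputable def regionWord [Fintype Q] (M : ℕ) (γ : Config Q) : List (RegionLetter Q) :=
  .head (regionClass M γ 0) (inactiveLocs M γ) ::
    (((fracts M γ).sort (· ≤ ·)).map fun f => .frac (regionClass M γ f)) ++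
      Finset.univ.toList.flatMap fun q => replicate (bigCount M γ q) (.big q)

lemma mem_regionClass {γ : Config Q} {f : ℝ} {p : Q × ℤ} :
    p ∈ regionClass M γ f ↔ (p.1, some (some (p.2, f))) ∈ γ.image (regionKey M id) :=
  Finset.mem_preimage

lemma mem_inactiveLocs {γ : Config Q} {q : Q} :
    q ∈ inactiveLocs M γ ↔ (q, none) ∈ γ.image (regionKey M id) :=
  Finset.mem_preimage

lemma pos_of_mem_fracts {γ : Config Q} {f : ℝ} (hf : f ∈ fracts M γ) : 0 < f := by
  obtain ⟨hf0, hf⟩ := Finset.mem_erase.1 hf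
  obtain ⟨s, -, rfl⟩ := Finset.mem_image.1 hf
  exact (Int.fract_nonneg _).lt_of_ne' hf0

lemma fract_mem_insert_fracts {γ : Config Q} {s : Q × Option ℝ≥0} (hs : s ∈ γ) {r : ℝ≥0}
    (hr : s.2 = some r) (hM : r ≤ (M : ℝ≥0)) :
    Int.fract (r : ℝ) ∈ insert 0 (fracts M γ : Set ℝ) := by
  by_cases h0 : Int.fract (r : ℝ) = 0
  · exact Or.inl h0
  refine Or.inr (Finset.mem_erase.2 ⟨h0, Finset.mem_image.2 ⟨s, Finset.mem_filter.2 ⟨hs, ?_⟩, ?_⟩⟩)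
  · intro r' hr'
    rw [hr] at hr'
    rwa [← Option.some.inj hr']
  · rw [hr]
    rfl

lemma floor_mem_Icc_of_mem_regionClass {γ : Config Q} {f : ℝ} {p : Q × ℤ}
    (hp : p ∈ regionClass M γ f) : p.2 ∈ Set.Icc (0 : ℤ) M := by
  obtain ⟨⟨q, _ | r⟩, -, h⟩ := Finset.mem_image.1 (mem_regionClass.1 hp) <;>
    simp only [regionKey, Option.map_none, Option.map_some, Prod.mk.injEq, reduceCtorEq,
      and_false] at h
  by_cases hr : r ≤ (M : ℝ≥0) <;>
    simp only [hr, if_true, if_false, Option.some.injEq, Prod.mk.injEq, reduceCtorEq,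
      and_false] at h
  rw [← h.2.1]
  refine ⟨Int.floor_nonneg.2 r.2, Int.floor_le_iff.2 ?_⟩
  exact_mod_cast (NNReal.coe_le_coe.2 hr).trans_lt (by simp)

variable [Fintype Q]

lemma regionWord_isBounded (γ : Config Q) : ∀ l ∈ regionWord M γ, l.IsBounded M := by
  simp only [regionWord, cons_append, mem_cons, mem_append, mem_map, mem_flatMap,
    Finset.mem_toList, Finset.mem_univ, true_and, mem_replicate]
  rintro l (rfl | ⟨f, -, rfl⟩ | ⟨q, -, rfl⟩)
  · exact fun p hp => floor_mem_Icc_of_mem_regionClass hp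
  · exact fun p hp => floor_mem_Icc_of_mem_regionClass hp
  · trivial

lemma length_regionWord_le (γ : Config Q) :
    (regionWord M γ).length ≤ 1 + γ.card + Fintype.card Q * γ.card := by
  have hfr : (fracts M γ).card ≤ γ.card :=
    (Finset.card_erase_le).trans (Finset.card_image_le.trans (Finset.card_filter_le _ _))
  have hbig : (Finset.univ.toList.map fun q => bigCount M γ q).sum ≤ Fintype.card Q * γ.card := by
    have := List.sum_le_card_nsmul (Finset.univ.toList.map fun q => bigCount M γ q) γ.card
      (by simp [bigCount, Finset.card_filter_le])
    simp only [length_map, Finset.length_toList, Finset.card_univ, smul_eq_mul] at this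
    exact this
  simp only [regionWord, cons_append, length_cons, length_append, length_map, Finset.length_sort,
    length_flatMap, length_replicate]
  omega

lemma filter_isHead_regionWord (γ : Config Q) :
    (regionWord M γ).filter RegionLetter.isHead =
      [.head (regionClass M γ 0) (inactiveLocs M γ)] := by
  simp [regionWord, RegionLetter.isHead, filter_cons, filter_append, filter_flatMap,
    filter_map, Function.comp_def]

lemma filter_isFrac_regionWord (γ : Config Q) :
    (regionWord M γ).filter RegionLetter.isFrac =
      ((fracts M γ).sort (· ≤ ·)).map fun f => .frac (regionClass M γ f) := by
  simp [regionWord, RegionLetter.isFrac, filter_append, filter_flatMap, filter_map,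
    Function.comp_def]

lemma count_big_regionWord (γ : Config Q) (q : Q) :
    (regionWord M γ).count (.big q) = bigCount M γ q := by
  simp [regionWord, count_flatMap, count_replicate, count_eq_zero]

theorem cfgEntails_of_regionWord_sublist {γ γ' : Config Q} (h : regionWord M γ <+ regionWord M γ') :
    CfgEntails M γ γ' := by
  have hhead := h.filter RegionLetter.isHead
  rw [filter_isHead_regionWord, filter_isHead_regionWord, singleton_sublist, mem_singleton,
    RegionLetter.head.injEq] at hhead
  obtain ⟨hcls0, hinact⟩ := hhead
  have hfrac := h.filter RegionLetter.isFrac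
  rw [filter_isFrac_regionWord, filter_isFrac_regionWord] at hfrac
  obtain ⟨φ, hφ, hφmem⟩ := exists_strictMonoOn_of_map_sublist_map
    (Finset.sortedLT_sort _).pairwise (Finset.sortedLT_sort _).pairwise hfrac
  simp only [Finset.mem_sort, RegionLetter.frac.injEq] at hφ hφmem
  set ψ := Function.update φ 0 0
  have hψ : StrictMonoOn ψ (insert 0 (fracts M γ : Set ℝ)) :=
    strictMonoOn_insert_update hφ (fun f hf => pos_of_mem_fracts hf)
      (fun f hf => pos_of_mem_fracts (hφmem f hf).1)
  have hcls : ∀ f ∈ insert 0 (fracts M γ : Set ℝ), regionClass M γ' (ψ f) = regionClass M γ f := by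
    rintro f (rfl | hf)
    · simpa [ψ] using hcls0.symm
    · simpa [ψ, (pos_of_mem_fracts hf).ne'] using (hφmem f hf).2
  refine cfgEntails_of_regionKey hψ (Set.mem_insert _ _) (by simp [ψ])
    (fun s hs r hr hM => fract_mem_insert_fracts hs hr hM) (fun s hs hbig => ?_)
    (fun q => by simpa only [count_big_regionWord, bigCount] using h.count_le (.big q))
  obtain ⟨q, _ | r⟩ := s
  · exact mem_inactiveLocs.1 (hinact ▸ mem_inactiveLocs.2 (Finset.mem_image_of_mem _ hs))
  have hM : r ≤ (M : ℝ≥0) := by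
    by_contra hM
    rw [regionKey_of_eq_some rfl, if_neg hM] at hbig
    exact hbig rfl
  have hmem : (q, ⌊(r : ℝ)⌋) ∈ regionClass M γ (Int.fract (r : ℝ)) := by
    rw [mem_regionClass]
    exact Finset.mem_image.2 ⟨_, hs, by rw [regionKey_of_eq_some rfl, if_pos hM]; rfl⟩
  rw [← hcls _ (fract_mem_insert_fracts hs rfl hM), mem_regionClass] at hmem
  rwa [regionKey_of_eq_some rfl, if_pos hM]

end RegionWord

section Nodes

variable {Q : Type*}

lemma card_le_of_nodeSat {Z : SemZone Q} {IA : Finset (Q × ℕ)} {γ : Config Q}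
    (hγ : NodeSat Z IA γ) : γ.card ≤ (Z.vars ∪ IA).card := by
  obtain ⟨h, -, -, hsurj, -⟩ := hγ
  refine (Finset.card_le_card fun s hs => ?_).trans (Finset.card_image_le (f := h))
  obtain ⟨y, hy, rfl⟩ := hsurj s hs
  exact Finset.mem_image_of_mem h hy

lemma finite_regionWord_image_nodeSat [Fintype Q] (M : ℕ) (Z : SemZone Q)
    (IA : Finset (Q × ℕ)) : (regionWord M '' {γ | NodeSat Z IA γ}).Finite := by
  set N := (Z.vars ∪ IA).card
  refine (finite_setOf_forall_mem_length_le (RegionLetter.finite_setOf_isBounded M)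
    (1 + N + Fintype.card Q * N)).subset ?_
  rintro _ ⟨γ, hγ, rfl⟩
  have hcard := card_le_of_nodeSat hγ
  refine ⟨regionWord_isBounded γ, (length_regionWord_le γ).trans ?_⟩
  gcongr

end Nodes

theorem statement11_general {Q : Type*} [Fintype Q] (M : ℕ)
    (Zs : ℕ → Zone Q) (IAs : ℕ → Finset (Q × ℕ)) :
    ∃ i j, i < j ∧ NodeEntails M (Zs i).toSem (IAs i) (Zs j).toSem (IAs j) := by
  obtain ⟨i, j, hij, hsmyth⟩ := exists_lt_forall_exists_sublist
    (RegionLetter.finite_setOf_isBounded M)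
    (F := fun n => regionWord M '' {γ | NodeSat (Zs n).toSem (IAs n) γ})
    (fun n => finite_regionWord_image_nodeSat M _ _)
    (by rintro n _ ⟨γ, -, rfl⟩; exact regionWord_isBounded γ)
  refine ⟨i, j, hij, fun γ' hγ' => ?_⟩
  obtain ⟨_, ⟨γ, hγ, rfl⟩, hsub⟩ := hsmyth _ ⟨γ', hγ', rfl⟩
  exact ⟨γ, hγ, cfgEntails_of_regionWord_sublist hsub⟩

/-- For every fixed `M`, node entailment is a well-quasi-order:
every infinite sequence of nodes contains `i < j` with
`(Zᵢ,IAᵢ) ⊨_M (Zⱼ,IAⱼ)`. -/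
theorem statement11 {Q : Type*} [Fintype Q] (M : ℕ)
    (Zs : ℕ → Zone Q) (IAs : ℕ → Finset (Q × ℕ))
    (hwf : ∀ n, (Zs n).wf)
    (hv : ∀ n, ∀ y ∈ (Zs n).vars, 1 ≤ y.2)
    (hia : ∀ n, ∀ y ∈ IAs n, y.2 = 0) :
    ∃ i j, i < j ∧ NodeEntails M (Zs i).toSem (IAs i) (Zs j).toSem (IAs j) :=
  statement11_general M Zs IAs

end ATAPaper
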